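/- The Barrett-Crane intertwiner, defined as i = Σ_J (1/d_J) Σ_k C^{Jk}_{J1 m1 J2 m2} C^{J3 m3 J4 m4}_{Jk} (a sum over intermediate simple representations weighted by inverse dimension), equals the group integral ∫_{SU(2)} ρ_{J1}(h)^{l1}_{r1} ρ_{J2}(h)^{l2}_{r2} ρ_{J3}(h⁻¹)^{r3}_{l3} ρ_{J4}(h⁻¹)^{r4}_{l4} dh. -/

import Mathlib

open MeasureTheory Matrix

noncomputable def detHom : Matrix.unitaryGroup (Fin 2) ℂ →* unitary ℂ where
  toFun A := ⟨(A : Matrix (Fin 2) (Fin 2) ℂ).det, Matrix.det_of_mem_unitary A.2⟩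
  map_one' := by ext; simp
  map_mul' := by intro A B; ext; simp

/-- The special unitary group SU(2), as the kernel of the determinant on U(2). -/
noncomputable def SU2 : Subgroup (Matrix.unitaryGroup (Fin 2) ℂ) := detHom.ker

def IsIrrep {G : Type} [Group G] {d : ℕ} (ρ : G →* Matrix.unitaryGroup (Fin d) ℂ) : Prop :=
  ∀ M : Matrix (Fin d) (Fin d) ℂ,
    (∀ g : G, (ρ g : Matrix (Fin d) (Fin d) ℂ) * M = M * (ρ g : Matrix (Fin d) (Fin d) ℂ)) →
    ∃ c : ℂ, M = c • (1 : Matrix (Fin d) (Fin d) ℂ)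

def RepEquiv {G : Type} [Group G] {d₁ d₂ : ℕ}
    (ρ₁ : G →* Matrix.unitaryGroup (Fin d₁) ℂ)
    (ρ₂ : G →* Matrix.unitaryGroup (Fin d₂) ℂ) : Prop :=
  ∃ T : Matrix (Fin d₂) (Fin d₁) ℂ, T ≠ 0 ∧
    ∀ g : G, (ρ₂ g : Matrix (Fin d₂) (Fin d₂) ℂ) * T = T * (ρ₁ g : Matrix (Fin d₁) (Fin d₁) ℂ)

set_option linter.unusedSectionVars false

section Schur

variable {G : Type} [Group G] [TopologicalSpace G] [IsTopologicalGroup G] [CompactSpace G]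
  [T2Space G] [MeasurableSpace G] [BorelSpace G]
  (μ : Measure G) [μ.IsHaarMeasure] [IsProbabilityMeasure μ]

lemma cont_integrable {f : G → ℂ} (hf : Continuous f) : Integrable f μ := by
  rw [← integrableOn_univ]
  exact hf.continuousOn.integrableOn_compact isCompact_univ

lemma entry_cont {d : ℕ} (ρ : G →* Matrix.unitaryGroup (Fin d) ℂ)
    (hc : Continuous fun g => (ρ g : Matrix (Fin d) (Fin d) ℂ)) (m n : Fin d) :
    Continuous fun g => (ρ g : Matrix (Fin d) (Fin d) ℂ) m n :=
  (continuous_apply n).comp ((continuous_apply m).comp hc)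

variable {a b : ℕ} (σ : G →* Matrix.unitaryGroup (Fin a) ℂ)
  (τ : G →* Matrix.unitaryGroup (Fin b) ℂ)

/-- The averaged matrix with "inserted" standard basis matrix at `(n, p)`. -/
noncomputable def Mnp (n : Fin a) (p : Fin b) : Matrix (Fin a) (Fin b) ℂ :=
  Matrix.of fun m q => ∫ h, (σ h : Matrix (Fin a) (Fin a) ℂ) m n
    * (τ h⁻¹ : Matrix (Fin b) (Fin b) ℂ) p q ∂μ

lemma integrand_integrable (hcσ : Continuous fun g => (σ g : Matrix (Fin a) (Fin a) ℂ))
    (hcτ : Continuous fun g => (τ g : Matrix (Fin b) (Fin b) ℂ)) (n m : Fin a) (p q : Fin b) :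
    Integrable (fun h => (σ h : Matrix (Fin a) (Fin a) ℂ) m n
      * (τ h⁻¹ : Matrix (Fin b) (Fin b) ℂ) p q) μ :=
  cont_integrable μ <| (entry_cont σ hcσ m n).mul
    ((entry_cont τ hcτ p q).comp continuous_inv)

lemma Mnp_intertwines (hcσ : Continuous fun g => (σ g : Matrix (Fin a) (Fin a) ℂ))
    (hcτ : Continuous fun g => (τ g : Matrix (Fin b) (Fin b) ℂ)) (n : Fin a) (p : Fin b) (g : G) :
    (σ g : Matrix (Fin a) (Fin a) ℂ) * Mnp μ σ τ n p
      = Mnp μ σ τ n p * (τ g : Matrix (Fin b) (Fin b) ℂ) := by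
  ext m q
  rw [Matrix.mul_apply, Matrix.mul_apply]
  have key : ∀ k, (σ g : Matrix (Fin a) (Fin a) ℂ) m k * (Mnp μ σ τ n p) k q
      = ∫ h, (σ g : Matrix (Fin a) (Fin a) ℂ) m k
        * ((σ h : Matrix (Fin a) (Fin a) ℂ) k n
          * (τ h⁻¹ : Matrix (Fin b) (Fin b) ℂ) p q) ∂μ := by
    intro k
    rw [Mnp, Matrix.of_apply, ← integral_const_mul]
  simp_rw [key]
  rw [← integral_finset_sum _ (fun k _ => ((integrand_integrable μ σ τ hcσ hcτ n k p q).const_mul _))]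
  have key2 : ∀ r, (Mnp μ σ τ n p) m r * (τ g : Matrix (Fin b) (Fin b) ℂ) r q
      = ∫ h, ((σ h : Matrix (Fin a) (Fin a) ℂ) m n
        * (τ h⁻¹ : Matrix (Fin b) (Fin b) ℂ) p r)
          * (τ g : Matrix (Fin b) (Fin b) ℂ) r q ∂μ := by
    intro r
    rw [Mnp, Matrix.of_apply, ← integral_mul_const]
  simp_rw [key2]
  rw [← integral_finset_sum _ (fun r _ => ((integrand_integrable μ σ τ hcσ hcτ n m p r).mul_const _))]
  have lhs_eq : ∀ h : G, (∑ k, (σ g : Matrix (Fin a) (Fin a) ℂ) m k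
      * ((σ h : Matrix (Fin a) (Fin a) ℂ) k n * (τ h⁻¹ : Matrix (Fin b) (Fin b) ℂ) p q))
      = (σ (g * h) : Matrix (Fin a) (Fin a) ℂ) m n
        * (τ ((g * h)⁻¹ * g) : Matrix (Fin b) (Fin b) ℂ) p q := by
    intro h
    have hm : (σ (g * h) : Matrix (Fin a) (Fin a) ℂ)
        = (σ g : Matrix (Fin a) (Fin a) ℂ) * (σ h : Matrix (Fin a) (Fin a) ℂ) := by
      rw [_root_.map_mul]; rfl
    have hgh : (g * h)⁻¹ * g = h⁻¹ := by group
    rw [hgh, hm, Matrix.mul_apply, Finset.sum_mul]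
    exact Finset.sum_congr rfl (fun k _ => by ring)
  have rhs_eq : ∀ h : G, (∑ r, ((σ h : Matrix (Fin a) (Fin a) ℂ) m n
      * (τ h⁻¹ : Matrix (Fin b) (Fin b) ℂ) p r) * (τ g : Matrix (Fin b) (Fin b) ℂ) r q)
      = (σ h : Matrix (Fin a) (Fin a) ℂ) m n
        * (τ (h⁻¹ * g) : Matrix (Fin b) (Fin b) ℂ) p q := by
    intro h
    have hm : (τ (h⁻¹ * g) : Matrix (Fin b) (Fin b) ℂ)
        = (τ h⁻¹ : Matrix (Fin b) (Fin b) ℂ) * (τ g : Matrix (Fin b) (Fin b) ℂ) := by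
      rw [_root_.map_mul]; rfl
    rw [hm, Matrix.mul_apply, Finset.mul_sum]
    exact Finset.sum_congr rfl (fun r _ => by ring)
  simp_rw [lhs_eq, rhs_eq]
  exact integral_mul_left_eq_self
    (fun x => (σ x : Matrix (Fin a) (Fin a) ℂ) m n
      * (τ (x⁻¹ * g) : Matrix (Fin b) (Fin b) ℂ) p q) g


lemma schur_ne (hcσ : Continuous fun g => (σ g : Matrix (Fin a) (Fin a) ℂ))
    (hcτ : Continuous fun g => (τ g : Matrix (Fin b) (Fin b) ℂ))
    (hne : ¬ RepEquiv τ σ) (m n : Fin a) (p q : Fin b) :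
    ∫ h, (σ h : Matrix (Fin a) (Fin a) ℂ) m n
      * (τ h⁻¹ : Matrix (Fin b) (Fin b) ℂ) p q ∂μ = 0 := by
  by_cases hM : Mnp μ σ τ n p = 0
  · exact congrFun (congrFun hM m) q
  · exact absurd ⟨Mnp μ σ τ n p, hM, fun g => Mnp_intertwines μ σ τ hcσ hcτ n p g⟩ hne

lemma schur_self (hcσ : Continuous fun g => (σ g : Matrix (Fin a) (Fin a) ℂ))
    (hirr : IsIrrep σ) (m n p q : Fin a) :
    ∫ h, (σ h : Matrix (Fin a) (Fin a) ℂ) m n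
      * (σ h⁻¹ : Matrix (Fin a) (Fin a) ℂ) p q ∂μ
      = (if p = n then 1 else 0) * (if m = q then 1 else 0) / (a : ℂ) := by
  obtain ⟨c, hc⟩ := hirr (Mnp μ σ σ n p) (fun g => Mnp_intertwines μ σ σ hcσ hcσ n p g)
  have htr : ∑ k, (Mnp μ σ σ n p) k k = (if p = n then (1 : ℂ) else 0) := by
    have h1 : ∑ k, (Mnp μ σ σ n p) k k
        = ∫ h, ∑ k, (σ h : Matrix (Fin a) (Fin a) ℂ) k n
          * (σ h⁻¹ : Matrix (Fin a) (Fin a) ℂ) p k ∂μ := by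
      rw [integral_finset_sum _ (fun k _ => integrand_integrable μ σ σ hcσ hcσ n k p k)]
      rfl
    have h2 : ∀ h : G, (∑ k, (σ h : Matrix (Fin a) (Fin a) ℂ) k n
        * (σ h⁻¹ : Matrix (Fin a) (Fin a) ℂ) p k) = (if p = n then (1 : ℂ) else 0) := by
      intro h
      have hm : ((σ h⁻¹ : Matrix (Fin a) (Fin a) ℂ) * (σ h : Matrix (Fin a) (Fin a) ℂ))
          = (1 : Matrix (Fin a) (Fin a) ℂ) := by
        have : (σ (h⁻¹ * h) : Matrix (Fin a) (Fin a) ℂ)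
            = (σ h⁻¹ : Matrix (Fin a) (Fin a) ℂ) * (σ h : Matrix (Fin a) (Fin a) ℂ) := by
          rw [_root_.map_mul]; rfl
        rw [← this, inv_mul_cancel, _root_.map_one]; rfl
      calc (∑ k, (σ h : Matrix (Fin a) (Fin a) ℂ) k n
            * (σ h⁻¹ : Matrix (Fin a) (Fin a) ℂ) p k)
          = ((σ h⁻¹ : Matrix (Fin a) (Fin a) ℂ) * (σ h : Matrix (Fin a) (Fin a) ℂ)) p n := by
            rw [Matrix.mul_apply]
            exact Finset.sum_congr rfl (fun k _ => by ring)
        _ = (1 : Matrix (Fin a) (Fin a) ℂ) p n := by rw [hm]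
        _ = (if p = n then (1 : ℂ) else 0) := Matrix.one_apply
    rw [h1]
    simp_rw [h2]
    simp
  have htr2 : ∑ k, (Mnp μ σ σ n p) k k = c * a := by
    rw [hc]
    simp [Matrix.smul_apply, Matrix.one_apply, mul_comm]
  have ha : (a : ℂ) ≠ 0 := by
    have : 0 < a := Fin.pos m
    exact_mod_cast Nat.cast_ne_zero.mpr this.ne'
  have hcval : c = (if p = n then (1 : ℂ) else 0) / a := by
    field_simp
    rw [← htr2, htr]
  have hentry : (Mnp μ σ σ n p) m q = c * (if m = q then 1 else 0) := by
    rw [hc]; simp [Matrix.smul_apply, Matrix.one_apply]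
  calc ∫ h, (σ h : Matrix (Fin a) (Fin a) ℂ) m n
        * (σ h⁻¹ : Matrix (Fin a) (Fin a) ℂ) p q ∂μ
      = (Mnp μ σ σ n p) m q := rfl
    _ = c * (if m = q then 1 else 0) := hentry
    _ = (if p = n then 1 else 0) * (if m = q then 1 else 0) / (a : ℂ) := by
        rw [hcval]; ring

end Schur


/-- The Barrett-Crane intertwiner
`i = Σ_J (1/d_J) Σ_{l,r} C^{Jr}_{J₁r₁J₂r₂} C^{J₁l₁J₂l₂}_{Jl} C^{Jl}_{J₃l₃J₄l₄} C^{J₃r₃J₄r₄}_{Jr}`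
(sum over intermediate representations weighted by inverse dimension, expressed via
Clebsch-Gordan coefficients) equals the SU(2) group integral
`∫ ρ_{J₁}(h)^{l₁}_{r₁} ρ_{J₂}(h)^{l₂}_{r₂} ρ_{J₃}(h⁻¹)^{r₃}_{l₃} ρ_{J₄}(h⁻¹)^{r₄}_{l₄} dh`. -/
theorem stmt11 [IsTopologicalGroup ↥SU2] [CompactSpace ↥SU2]
    [MeasurableSpace ↥SU2] [BorelSpace ↥SU2]
    (μ : Measure ↥SU2) [μ.IsHaarMeasure] [IsProbabilityMeasure μ]
    {d₁ d₂ d₃ d₄ : ℕ}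
    (ρ₁ : ↥SU2 →* Matrix.unitaryGroup (Fin d₁) ℂ)
    (ρ₂ : ↥SU2 →* Matrix.unitaryGroup (Fin d₂) ℂ)
    (ρ₃ : ↥SU2 →* Matrix.unitaryGroup (Fin d₃) ℂ)
    (ρ₄ : ↥SU2 →* Matrix.unitaryGroup (Fin d₄) ℂ)
    (hc₁ : Continuous fun g => (ρ₁ g : Matrix (Fin d₁) (Fin d₁) ℂ))
    (hc₂ : Continuous fun g => (ρ₂ g : Matrix (Fin d₂) (Fin d₂) ℂ))
    (hc₃ : Continuous fun g => (ρ₃ g : Matrix (Fin d₃) (Fin d₃) ℂ))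
    (hc₄ : Continuous fun g => (ρ₄ g : Matrix (Fin d₄) (Fin d₄) ℂ))
    -- the intermediate simple representations J, pairwise inequivalent irreducibles
    {ι : Type} [Fintype ι] (D : ι → ℕ)
    (τ : ∀ i : ι, ↥SU2 →* Matrix.unitaryGroup (Fin (D i)) ℂ)
    (hτc : ∀ i, Continuous fun g => (τ i g : Matrix (Fin (D i)) (Fin (D i)) ℂ))
    (hτirr : ∀ i, IsIrrep (τ i))
    (hτne : ∀ i j : ι, i ≠ j → ¬ RepEquiv (τ i) (τ j))
    -- Clebsch-Gordan coefficients realizing the decompositions of ρ₁ ⊗ ρ₂ and ρ₃ ⊗ ρ₄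
    (C12 : ∀ i : ι, Fin (D i) → Fin d₁ → Fin d₂ → ℂ)
    (C34 : ∀ i : ι, Fin (D i) → Fin d₃ → Fin d₄ → ℂ)
    (hdec12 : ∀ (g : ↥SU2) (m₁ : Fin d₁) (m₂ : Fin d₂) (n₁ : Fin d₁) (n₂ : Fin d₂),
      (ρ₁ g : Matrix (Fin d₁) (Fin d₁) ℂ) m₁ n₁ * (ρ₂ g : Matrix (Fin d₂) (Fin d₂) ℂ) m₂ n₂
        = ∑ i : ι, ∑ m : Fin (D i), ∑ n : Fin (D i),
            C12 i m m₁ m₂ * (starRingEnd ℂ) (C12 i n n₁ n₂)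
              * (τ i g : Matrix (Fin (D i)) (Fin (D i)) ℂ) m n)
    (hdec34 : ∀ (g : ↥SU2) (m₃ : Fin d₃) (m₄ : Fin d₄) (n₃ : Fin d₃) (n₄ : Fin d₄),
      (ρ₃ g : Matrix (Fin d₃) (Fin d₃) ℂ) m₃ n₃ * (ρ₄ g : Matrix (Fin d₄) (Fin d₄) ℂ) m₄ n₄
        = ∑ i : ι, ∑ m : Fin (D i), ∑ n : Fin (D i),
            C34 i m m₃ m₄ * (starRingEnd ℂ) (C34 i n n₃ n₄)
              * (τ i g : Matrix (Fin (D i)) (Fin (D i)) ℂ) m n) :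
    ∀ (l₁ r₁ : Fin d₁) (l₂ r₂ : Fin d₂) (l₃ r₃ : Fin d₃) (l₄ r₄ : Fin d₄),
      (∑ i : ι, (1 / (D i : ℂ)) * ∑ l : Fin (D i), ∑ r : Fin (D i),
          (starRingEnd ℂ) (C12 i r r₁ r₂) * C12 i l l₁ l₂
            * (starRingEnd ℂ) (C34 i l l₃ l₄) * C34 i r r₃ r₄)
        = ∫ h, (ρ₁ h : Matrix (Fin d₁) (Fin d₁) ℂ) l₁ r₁
            * (ρ₂ h : Matrix (Fin d₂) (Fin d₂) ℂ) l₂ r₂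
            * (ρ₃ h⁻¹ : Matrix (Fin d₃) (Fin d₃) ℂ) r₃ l₃
            * (ρ₄ h⁻¹ : Matrix (Fin d₄) (Fin d₄) ℂ) r₄ l₄ ∂μ := by
  intro l₁ r₁ l₂ r₂ l₃ r₃ l₄ r₄
  -- abbreviations
  set A : ∀ i : ι, Fin (D i) → Fin (D i) → ℂ :=
    fun i m n => C12 i m l₁ l₂ * (starRingEnd ℂ) (C12 i n r₁ r₂) with hA
  set B : ∀ j : ι, Fin (D j) → Fin (D j) → ℂ :=
    fun j p q => C34 j p r₃ r₄ * (starRingEnd ℂ) (C34 j q l₃ l₄) with hB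
  have hτe : ∀ (i : ι) (m n : Fin (D i)),
      Continuous fun h : ↥SU2 => (τ i h : Matrix (Fin (D i)) (Fin (D i)) ℂ) m n :=
    fun i m n => entry_cont (τ i) (hτc i) m n
  have hτe' : ∀ (i : ι) (m n : Fin (D i)),
      Continuous fun h : ↥SU2 => (τ i h⁻¹ : Matrix (Fin (D i)) (Fin (D i)) ℂ) m n :=
    fun i m n => (hτe i m n).comp continuous_inv
  have contTerm : ∀ (i j : ι) (m n : Fin (D i)) (p q : Fin (D j)),
      Continuous fun h : ↥SU2 => (A i m n * B j p q)
        * ((τ i h : Matrix (Fin (D i)) (Fin (D i)) ℂ) m n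
          * (τ j h⁻¹ : Matrix (Fin (D j)) (Fin (D j)) ℂ) p q) :=
    fun i j m n p q => continuous_const.mul ((hτe i m n).mul (hτe' j p q))
  -- Step 1: rewrite the integrand
  have hF : ∀ h : ↥SU2,
      (ρ₁ h : Matrix (Fin d₁) (Fin d₁) ℂ) l₁ r₁
        * (ρ₂ h : Matrix (Fin d₂) (Fin d₂) ℂ) l₂ r₂
        * (ρ₃ h⁻¹ : Matrix (Fin d₃) (Fin d₃) ℂ) r₃ l₃
        * (ρ₄ h⁻¹ : Matrix (Fin d₄) (Fin d₄) ℂ) r₄ l₄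
      = ∑ i : ι, ∑ m : Fin (D i), ∑ n : Fin (D i), ∑ j : ι, ∑ p : Fin (D j), ∑ q : Fin (D j),
          (A i m n * B j p q)
            * ((τ i h : Matrix (Fin (D i)) (Fin (D i)) ℂ) m n
              * (τ j h⁻¹ : Matrix (Fin (D j)) (Fin (D j)) ℂ) p q) := by
    intro h
    have e1 := hdec12 h l₁ l₂ r₁ r₂
    have e2 := hdec34 h⁻¹ r₃ r₄ l₃ l₄
    calc (ρ₁ h : Matrix (Fin d₁) (Fin d₁) ℂ) l₁ r₁
          * (ρ₂ h : Matrix (Fin d₂) (Fin d₂) ℂ) l₂ r₂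
          * (ρ₃ h⁻¹ : Matrix (Fin d₃) (Fin d₃) ℂ) r₃ l₃
          * (ρ₄ h⁻¹ : Matrix (Fin d₄) (Fin d₄) ℂ) r₄ l₄
        = ((ρ₁ h : Matrix (Fin d₁) (Fin d₁) ℂ) l₁ r₁
            * (ρ₂ h : Matrix (Fin d₂) (Fin d₂) ℂ) l₂ r₂)
          * ((ρ₃ h⁻¹ : Matrix (Fin d₃) (Fin d₃) ℂ) r₃ l₃
            * (ρ₄ h⁻¹ : Matrix (Fin d₄) (Fin d₄) ℂ) r₄ l₄) := by ring
      _ = _ := by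
          rw [e1, e2]
          simp_rw [Finset.sum_mul, Finset.mul_sum]
          refine Finset.sum_congr rfl fun i _ => Finset.sum_congr rfl fun m _ =>
            Finset.sum_congr rfl fun n _ => Finset.sum_congr rfl fun j _ =>
            Finset.sum_congr rfl fun p _ => Finset.sum_congr rfl fun q _ => by
              simp only [hA, hB]; ring
  -- Step 2: pull the integral inside the sums
  have hInt : (∫ h, (ρ₁ h : Matrix (Fin d₁) (Fin d₁) ℂ) l₁ r₁
        * (ρ₂ h : Matrix (Fin d₂) (Fin d₂) ℂ) l₂ r₂
        * (ρ₃ h⁻¹ : Matrix (Fin d₃) (Fin d₃) ℂ) r₃ l₃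
        * (ρ₄ h⁻¹ : Matrix (Fin d₄) (Fin d₄) ℂ) r₄ l₄ ∂μ)
      = ∑ i : ι, ∑ m : Fin (D i), ∑ n : Fin (D i), ∑ j : ι, ∑ p : Fin (D j), ∑ q : Fin (D j),
          (A i m n * B j p q)
            * ∫ h, (τ i h : Matrix (Fin (D i)) (Fin (D i)) ℂ) m n
              * (τ j h⁻¹ : Matrix (Fin (D j)) (Fin (D j)) ℂ) p q ∂μ := by
    simp_rw [hF]
    rw [integral_finset_sum _ (fun i _ => cont_integrable μ
      (continuous_finset_sum _ fun m _ => continuous_finset_sum _ fun n _ =>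
        continuous_finset_sum _ fun j _ => continuous_finset_sum _ fun p _ =>
        continuous_finset_sum _ fun q _ => contTerm i j m n p q))]
    refine Finset.sum_congr rfl fun i _ => ?_
    rw [integral_finset_sum _ (fun m _ => cont_integrable μ
      (continuous_finset_sum _ fun n _ =>
        continuous_finset_sum _ fun j _ => continuous_finset_sum _ fun p _ =>
        continuous_finset_sum _ fun q _ => contTerm i j m n p q))]
    refine Finset.sum_congr rfl fun m _ => ?_
    rw [integral_finset_sum _ (fun n _ => cont_integrable μ
      (continuous_finset_sum _ fun j _ => continuous_finset_sum _ fun p _ =>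
        continuous_finset_sum _ fun q _ => contTerm i j m n p q))]
    refine Finset.sum_congr rfl fun n _ => ?_
    rw [integral_finset_sum _ (fun j _ => cont_integrable μ
      (continuous_finset_sum _ fun p _ =>
        continuous_finset_sum _ fun q _ => contTerm i j m n p q))]
    refine Finset.sum_congr rfl fun j _ => ?_
    rw [integral_finset_sum _ (fun p _ => cont_integrable μ
      (continuous_finset_sum _ fun q _ => contTerm i j m n p q))]
    refine Finset.sum_congr rfl fun p _ => ?_
    rw [integral_finset_sum _ (fun q _ => cont_integrable μ (contTerm i j m n p q))]
    exact Finset.sum_congr rfl fun q _ => integral_const_mul _ _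
  rw [hInt]
  -- Step 3: evaluate via Schur orthogonality
  refine Finset.sum_congr rfl fun i _ => ?_
  have hcollapse : ∀ m n : Fin (D i),
      (∑ j : ι, ∑ p : Fin (D j), ∑ q : Fin (D j), (A i m n * B j p q)
        * ∫ h, (τ i h : Matrix (Fin (D i)) (Fin (D i)) ℂ) m n
          * (τ j h⁻¹ : Matrix (Fin (D j)) (Fin (D j)) ℂ) p q ∂μ)
      = A i m n * B i n m / (D i : ℂ) := by
    intro m n
    rw [Finset.sum_eq_single i]
    · -- the j = i term
      have hval : ∀ p q : Fin (D i),
          (∫ h, (τ i h : Matrix (Fin (D i)) (Fin (D i)) ℂ) m n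
            * (τ i h⁻¹ : Matrix (Fin (D i)) (Fin (D i)) ℂ) p q ∂μ)
          = (if p = n then 1 else 0) * (if m = q then 1 else 0) / (D i : ℂ) :=
        fun p q => schur_self μ (τ i) (hτc i) (hτirr i) m n p q
      simp_rw [hval]
      rw [Finset.sum_eq_single n]
      · rw [Finset.sum_eq_single m]
        · simp [div_eq_mul_inv]
        · intro q _ hq; simp [Ne.symm hq]
        · intro hm; exact absurd (Finset.mem_univ m) hm
      · intro p _ hp
        simp [hp]
      · intro hn; exact absurd (Finset.mem_univ n) hn
    · intro j _ hji
      have hz : ∀ p q : Fin (D j),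
          (∫ h, (τ i h : Matrix (Fin (D i)) (Fin (D i)) ℂ) m n
            * (τ j h⁻¹ : Matrix (Fin (D j)) (Fin (D j)) ℂ) p q ∂μ) = 0 :=
        fun p q => schur_ne μ (τ i) (τ j) (hτc i) (hτc j) (hτne j i hji) m n p q
      simp only [hz, mul_zero, Finset.sum_const_zero]
    · intro hi; exact absurd (Finset.mem_univ i) hi
  simp_rw [hcollapse]
  rw [Finset.mul_sum]
  refine Finset.sum_congr rfl fun m _ => ?_
  rw [Finset.mul_sum]
  refine Finset.sum_congr rfl fun n _ => ?_
  simp only [hA, hB]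
  field_simp
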